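/- For monotone boolean functions of decision tree depth d (d ≥ 5), the maximum number R_d of relevant variables satisfies R_d ≤ 2^{d−2} + 2. -/

import Mathlib

open Finset
open scoped Classical

namespace BF

noncomputable section

/-- flip the bits of `x` belonging to `B`. -/
def flipS {n : ℕ} (x : Fin n → Bool) (B : Finset (Fin n)) : Fin n → Bool :=
  fun i => if i ∈ B then !(x i) else x i

/-- flip the `i`-th bit of `x`. -/
def flip1 {n : ℕ} (x : Fin n → Bool) (i : Fin n) : Fin n → Bool :=
  fun j => if j = i then !(x j) else x j

/-- real value of a boolean. -/
def bval (b : Bool) : ℝ := if b then 1 else 0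

/-- coefficient of the monomial `∏_{i ∈ S} x_i` in the unique multilinear
real polynomial expansion of `f` (Möbius inversion over the subcube lattice). -/
def coeffS {n : ℕ} (f : (Fin n → Bool) → ℝ) (S : Finset (Fin n)) : ℝ :=
  ∑ T ∈ S.powerset, (-1 : ℝ) ^ (S.card - T.card) * f (fun i => decide (i ∈ T))

/-- degree of the multilinear expansion of a real-valued function on the cube. -/
def degF {n : ℕ} (f : (Fin n → Bool) → ℝ) : ℕ :=
  (Finset.univ.filter fun S : Finset (Fin n) => coeffS f S ≠ 0).sup Finset.card

/-- degree of a boolean function. -/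
def degB {n : ℕ} (f : (Fin n → Bool) → Bool) : ℕ := degF (fun x => bval (f x))

/-- block sensitivity of `f` at `x`. -/
def bsAt {n : ℕ} (f : (Fin n → Bool) → Bool) (x : Fin n → Bool) : ℕ :=
  (Finset.univ.filter fun 𝓑 : Finset (Finset (Fin n)) =>
      (∀ B ∈ 𝓑, f (flipS x B) ≠ f x) ∧
      ∀ A ∈ 𝓑, ∀ B ∈ 𝓑, A ≠ B → Disjoint A B).sup Finset.card

/-- block sensitivity of `f`. -/
def bs {n : ℕ} (f : (Fin n → Bool) → Bool) : ℕ := Finset.univ.sup (bsAt f)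

/-- sensitivity of `f` at `x`. -/
def sx {n : ℕ} (f : (Fin n → Bool) → Bool) (x : Fin n → Bool) : ℕ :=
  (Finset.univ.filter fun i => f (flip1 x i) ≠ f x).card

/-- (maximum) sensitivity of `f`. -/
def sens {n : ℕ} (f : (Fin n → Bool) → Bool) : ℕ := Finset.univ.sup (sx f)

/-- coordinate `i` is relevant for `f`. -/
def Rel {n : ℕ} (i : Fin n) (f : (Fin n → Bool) → Bool) : Prop :=
  ∃ x, f (flip1 x i) ≠ f x

/-- the set of relevant coordinates of `f`. -/
def relSet {n : ℕ} (f : (Fin n → Bool) → Bool) : Finset (Fin n) :=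
  Finset.univ.filter fun i => Rel i f

/-- the number of relevant variables `n(f)`. -/
def nrel {n : ℕ} (f : (Fin n → Bool) → Bool) : ℕ := (relSet f).card

/-- influence of coordinate `i` on `f` (uniform distribution). -/
def infl {n : ℕ} (f : (Fin n → Bool) → Bool) (i : Fin n) : ℝ :=
  ((Finset.univ.filter fun x : Fin n → Bool => f x ≠ f (flip1 x i)).card : ℝ) / 2 ^ n

/-- total influence `I[f]`. -/
def totalInf {n : ℕ} (f : (Fin n → Bool) → Bool) : ℝ := ∑ i, infl f i

/-- restriction of `f` fixing the coordinates in `H` according to `α`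
(viewed as a function on the full cube not depending on the coordinates in `H`). -/
def restrict {n : ℕ} (f : (Fin n → Bool) → Bool) (H : Finset (Fin n))
    (α : Fin n → Bool) : (Fin n → Bool) → Bool :=
  fun x => f (fun i => if i ∈ H then α i else x i)

/-- certificate complexity of `f` at `x`. -/
def certAt {n : ℕ} (f : (Fin n → Bool) → Bool) (x : Fin n → Bool) : ℕ :=
  sInf {k | ∃ S : Finset (Fin n), S.card = k ∧
    ∀ y, (∀ i ∈ S, y i = x i) → f y = f x}

/-- certificate complexity `C(f)`. -/
def certC {n : ℕ} (f : (Fin n → Bool) → Bool) : ℕ := Finset.univ.sup (certAt f)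

/-- `f` is in standard form: `f(0) = 0` and `f(e_i) = 1` for every basis vector. -/
def stdForm {b : ℕ} (f : (Fin b → Bool) → Bool) : Prop :=
  f (fun _ => false) = false ∧ ∀ i : Fin b, f (fun j => decide (j = i)) = true

end

end BF

open BF

/-- deterministic decision trees on `n` boolean variables. -/
inductive DTree (n : ℕ) where
  | leaf : Bool → DTree n
  | node : Fin n → DTree n → DTree n → DTree n

/-- evaluation of a decision tree. -/
def DTree.evalT {n : ℕ} : DTree n → (Fin n → Bool) → Bool
  | .leaf b, _ => b
  | .node i t0 t1, x => if x i then (t1.evalT x) else (t0.evalT x)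

/-- depth of a decision tree. -/
def DTree.depth {n : ℕ} : DTree n → ℕ
  | .leaf _ => 0
  | .node _ t0 t1 => 1 + max t0.depth t1.depth

/-- decision tree depth `DT(f)`: minimal worst-case number of queries of a
deterministic decision tree computing `f`. -/
noncomputable def DT {n : ℕ} (f : (Fin n → Bool) → Bool) : ℕ :=
  sInf {d | ∃ t : DTree n, t.depth ≤ d ∧ ∀ x, t.evalT x = f x}

/-!
Split `f` at the first query `z` of an optimal tree: `f₀ ≤ f₁` are monotone of depth `d - 1`
and `n(f) ≤ n(f₀) + n(f₁) + 1 - |O|`, where `O` is the set of variables relevant to both.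
A minimal one of `f₀` and a maximal zero of `f₁` differ in some coordinate of `O`. So `O = ∅`
forces `f₀` or `f₁` to be constant; `O = {w}` forces `f₀ = x_w ∧ g₀` and `f₁ = x_w ∨ g₁`; and
`O = {u, v}` forces `f₀ = x_u ∧ g₀` or `f₁ = x_v ∨ g₁`. Such a `g` has depth one less than the
function it comes from, whence `R_d ≤ max {R_{d-1} + 1, 2 R_{d-1} - 2, 2 R_{d-2} + 2}` (the case
`|O| = 2` gives `R_{d-1} + R_{d-2}`, which is no larger), and this recursion solves to
`2^{d-2} + 2` from `d = 4` on.
-/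

namespace BF

variable {n : ℕ}

def restrictAt (f : (Fin n → Bool) → Bool) (z : Fin n) (c : Bool) : (Fin n → Bool) → Bool :=
  fun x => f (Function.update x z c)

/-- Setting `x u := b` forces the value `b`: `f = x_u ∧ g` for `b = false`, `f = x_u ∨ g` for
`b = true`. -/
def Forces (f : (Fin n → Bool) → Bool) (u : Fin n) (b : Bool) : Prop :=
  ∀ x, x u = b → f x = b

section Restriction

variable {f : (Fin n → Bool) → Bool} {x : Fin n → Bool} {i z u : Fin n} {b c : Bool}

theorem restrictAt_apply_of_eq (h : x z = c) : restrictAt f z c x = f x := by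
  simp [restrictAt, ← h]

theorem restrictAt_comm (h : u ≠ z) (b c : Bool) :
    restrictAt (restrictAt f u b) z c = restrictAt (restrictAt f z c) u b := by
  funext x
  simp only [restrictAt, Function.update_comm h]

theorem monotone_restrictAt (hf : Monotone f) (z : Fin n) (c : Bool) :
    Monotone (restrictAt f z c) :=
  fun _ _ hxy => hf (update_le_update_iff.2 ⟨le_rfl, fun j _ => hxy j⟩)

theorem restrictAt_false_le_true (hf : Monotone f) (z : Fin n) :
    restrictAt f z false ≤ restrictAt f z true :=
  fun _ => hf (update_le_update_iff'.2 (by decide))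

theorem flip1_eq_update (x : Fin n → Bool) (i : Fin n) :
    flip1 x i = Function.update x i (!x i) := by
  funext j
  by_cases h : j = i <;> simp [flip1, h]

theorem flip1_lt (h : x i = true) : flip1 x i < x := by
  rw [flip1_eq_update, update_lt_self_iff, h]
  decide

theorem lt_flip1 (h : x i = false) : x < flip1 x i := by
  rw [flip1_eq_update, lt_update_self_iff, h]
  decide

theorem mem_relSet : i ∈ relSet f ↔ Rel i f := by
  simp [relSet]

theorem relSet_eq_empty_of_forall_eq (h : ∀ x, f x = c) : relSet f = ∅ := by
  ext i
  simp only [mem_relSet, Rel, h, ne_eq, not_true_eq_false, exists_false, Finset.notMem_empty]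

theorem exists_eq_of_mem_relSet (h : i ∈ relSet f) (c : Bool) : ∃ x, f x = c := by
  obtain ⟨x, hx⟩ := mem_relSet.1 h
  by_contra! hne
  cases c <;> simp_all

theorem relSet_subset_insert_union (f : (Fin n → Bool) → Bool) (z : Fin n) :
    relSet f ⊆ insert z (relSet (restrictAt f z false) ∪ relSet (restrictAt f z true)) := by
  intro i hi
  obtain ⟨x, hx⟩ := mem_relSet.1 hi
  rcases eq_or_ne i z with rfl | hiz
  · exact Finset.mem_insert_self _ _
  have hrel : i ∈ relSet (restrictAt f z (x z)) := by
    refine mem_relSet.2 ⟨x, ?_⟩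
    rwa [restrictAt_apply_of_eq rfl, restrictAt_apply_of_eq (by simp [flip1, Ne.symm hiz])]
  refine Finset.mem_insert_of_mem (Finset.mem_union.2 ?_)
  cases hxz : x z <;> rw [hxz] at hrel <;> simp [hrel]

theorem nrel_add_card_inter_le (f : (Fin n → Bool) → Bool) (z : Fin n) :
    nrel f + #(relSet (restrictAt f z false) ∩ relSet (restrictAt f z true))
      ≤ nrel (restrictAt f z false) + nrel (restrictAt f z true) + 1 := by
  have := Finset.card_le_card (relSet_subset_insert_union f z)
  have := Finset.card_insert_le z (relSet (restrictAt f z false) ∪ relSet (restrictAt f z true))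
  have := Finset.card_union_add_card_inter (relSet (restrictAt f z false))
    (relSet (restrictAt f z true))
  simp only [nrel]
  omega

theorem Forces.restrictAt_of_ne (h : Forces f u b) (hz : z ≠ u) (c : Bool) :
    Forces (restrictAt f z c) u b :=
  fun x hx => h _ (by rwa [Function.update_of_ne hz.symm])

theorem Forces.eq_of_forall_eq (h : Forces f u b) (hc : ∀ x, f x = c) : c = b := by
  rw [← hc (Function.update (fun _ => b) u b)]
  exact h _ (by simp)

theorem Forces.nrel_le (h : Forces f u b) : nrel f ≤ nrel (restrictAt f u (!b)) + 1 := by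
  have hforced : relSet (restrictAt f u b) = ∅ :=
    relSet_eq_empty_of_forall_eq fun x => h _ (by simp)
  have hsub : relSet f ⊆ insert u (relSet (restrictAt f u (!b))) := by
    have := relSet_subset_insert_union f u
    cases b <;> simpa [hforced] using this
  exact (Finset.card_le_card hsub).trans (Finset.card_insert_le _ _)

end Restriction

section MinimalOnes

variable {f : (Fin n → Bool) → Bool} {p q : Fin n → Bool} {i u : Fin n}

theorem mem_relSet_of_minimal (hp : Minimal (f · = true) p) (hi : p i = true) : i ∈ relSet f :=
  mem_relSet.2 ⟨p, by simp [hp.prop, hp.not_prop_of_lt (flip1_lt hi)]⟩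

theorem mem_relSet_of_maximal (hq : Maximal (f · = false) q) (hi : q i = false) :
    i ∈ relSet f :=
  mem_relSet.2 ⟨q, by simp [hq.prop, hq.not_prop_of_gt (lt_flip1 hi)]⟩

theorem forces_false_of_minimal (h : ∀ p, Minimal (f · = true) p → p u = true) :
    Forces f u false := by
  intro x hx
  by_contra! hfx
  obtain ⟨p, hpx, hp⟩ := Finite.exists_le_minimal (p := (f · = true)) (by simpa using hfx)
  exact absurd (hpx u) (by simp [h p hp, hx])

theorem forces_true_of_maximal (h : ∀ q, Maximal (f · = false) q → q u = false) :
    Forces f u true := by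
  intro x hx
  by_contra! hfx
  obtain ⟨q, hxq, hq⟩ := Finite.exists_le_maximal (p := (f · = false)) (by simpa using hfx)
  exact absurd (hxq u) (by simp [h q hq, hx])

theorem exists_minimal_of_mem_relSet (h : i ∈ relSet f) : ∃ p, Minimal (f · = true) p :=
  let ⟨_, hx⟩ := exists_eq_of_mem_relSet h true
  let ⟨p, _, hp⟩ := Finite.exists_le_minimal (p := (f · = true)) hx
  ⟨p, hp⟩

theorem exists_maximal_of_mem_relSet (h : i ∈ relSet f) : ∃ q, Maximal (f · = false) q :=
  let ⟨_, hx⟩ := exists_eq_of_mem_relSet h false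
  let ⟨q, _, hq⟩ := Finite.exists_le_maximal (p := (f · = false)) hx
  ⟨q, hq⟩

end MinimalOnes

section Crossing

variable {f₀ f₁ : (Fin n → Bool) → Bool}

/-- `p ≤ q` is impossible, as it would give `1 = f₀ p ≤ f₁ p ≤ f₁ q = 0`. -/
theorem exists_mem_inter_relSet_of_minimal_of_maximal (hle : f₀ ≤ f₁) (hf₁ : Monotone f₁)
    {p q : Fin n → Bool} (hp : Minimal (f₀ · = true) p) (hq : Maximal (f₁ · = false) q) :
    ∃ i ∈ relSet f₀ ∩ relSet f₁, p i = true ∧ q i = false := by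
  obtain ⟨i, hpi, hqi⟩ : ∃ i, p i = true ∧ q i = false := by
    by_contra! h
    have hpq : p ≤ q := fun i => by
      cases hpi : p i
      · exact Bool.false_le _
      · simp [show q i = true by simpa using h i hpi]
    exact absurd ((hle p).trans (hf₁ hpq)) (by simp [hp.prop, hq.prop])
  exact ⟨i, Finset.mem_inter.2 ⟨mem_relSet_of_minimal hp hpi, mem_relSet_of_maximal hq hqi⟩,
    hpi, hqi⟩

theorem relSet_eq_empty_or_of_inter_relSet_eq_empty (hle : f₀ ≤ f₁) (hf₁ : Monotone f₁)
    (h : relSet f₀ ∩ relSet f₁ = ∅) : relSet f₀ = ∅ ∨ relSet f₁ = ∅ := by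
  by_contra! hne
  obtain ⟨⟨i, hi⟩, ⟨j, hj⟩⟩ := hne
  obtain ⟨p, hp⟩ := exists_minimal_of_mem_relSet hi
  obtain ⟨q, hq⟩ := exists_maximal_of_mem_relSet hj
  obtain ⟨k, hk, -⟩ := exists_mem_inter_relSet_of_minimal_of_maximal hle hf₁ hp hq
  simp [h] at hk

theorem forces_of_inter_relSet_eq_singleton (hle : f₀ ≤ f₁) (hf₁ : Monotone f₁) {w : Fin n}
    (h : relSet f₀ ∩ relSet f₁ = {w}) : Forces f₀ w false ∧ Forces f₁ w true := by
  have hw := Finset.mem_inter.1 (h ▸ Finset.mem_singleton_self w)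
  obtain ⟨p₀, hp₀⟩ := exists_minimal_of_mem_relSet hw.1
  obtain ⟨q₀, hq₀⟩ := exists_maximal_of_mem_relSet hw.2
  constructor
  · refine forces_false_of_minimal fun p hp => ?_
    obtain ⟨i, hi, hpi, -⟩ := exists_mem_inter_relSet_of_minimal_of_maximal hle hf₁ hp hq₀
    rw [h, Finset.mem_singleton] at hi
    exact hi ▸ hpi
  · refine forces_true_of_maximal fun q hq => ?_
    obtain ⟨i, hi, -, hqi⟩ := exists_mem_inter_relSet_of_minimal_of_maximal hle hf₁ hp₀ hq
    rw [h, Finset.mem_singleton] at hi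
    exact hi ▸ hqi

theorem forces_of_inter_relSet_eq_pair (hle : f₀ ≤ f₁) (hf₁ : Monotone f₁) {u v : Fin n}
    (h : relSet f₀ ∩ relSet f₁ = {u, v}) : Forces f₀ u false ∨ Forces f₁ v true := by
  by_cases hu : ∀ p, Minimal (f₀ · = true) p → p u = true
  · exact Or.inl (forces_false_of_minimal hu)
  push Not at hu
  obtain ⟨p, hp, hpu⟩ := hu
  refine Or.inr (forces_true_of_maximal fun q hq => ?_)
  obtain ⟨i, hi, hpi, hqi⟩ := exists_mem_inter_relSet_of_minimal_of_maximal hle hf₁ hp hq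
  rw [h, Finset.mem_insert, Finset.mem_singleton] at hi
  rcases hi with rfl | rfl
  · exact absurd hpi hpu
  · exact hqi

end Crossing

theorem nrel_le_of_restrictAt {f : (Fin n → Bool) → Bool} (hf : Monotone f) (z : Fin n)
    {a a' : ℕ} (ha : ∀ c, nrel (restrictAt f z c) ≤ a)
    (ha' : ∀ c u b, Forces (restrictAt f z c) u b → nrel (restrictAt f z c) ≤ a' + 1) :
    nrel f ≤ max (a + 1) (max (2 * a - 2) (2 * a' + 2)) := by
  have hle := restrictAt_false_le_true hf z
  have hf₁ := monotone_restrictAt hf z true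
  have hcount := nrel_add_card_inter_le f z
  have h₀ := ha false
  have h₁ := ha true
  set O := relSet (restrictAt f z false) ∩ relSet (restrictAt f z true)
  obtain hO | hO | hO | hO : #O = 0 ∨ #O = 1 ∨ #O = 2 ∨ 3 ≤ #O := by omega
  · rcases relSet_eq_empty_or_of_inter_relSet_eq_empty hle hf₁ (Finset.card_eq_zero.1 hO)
      with h | h <;> simp only [nrel, h, Finset.card_empty] at h₀ h₁ hcount ⊢ <;> omega
  · obtain ⟨w, hw⟩ := Finset.card_eq_one.1 hO
    obtain ⟨hw₀, hw₁⟩ := forces_of_inter_relSet_eq_singleton hle hf₁ hw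
    have := ha' _ _ _ hw₀
    have := ha' _ _ _ hw₁
    omega
  · obtain ⟨u, v, -, huv⟩ := Finset.card_eq_two.1 hO
    rcases forces_of_inter_relSet_eq_pair hle hf₁ huv with h | h <;>
      have := ha' _ _ _ h <;> omega
  · omega

end BF

namespace DTree

variable {n : ℕ}

def restrictAt : DTree n → Fin n → Bool → DTree n
  | leaf c, _, _ => leaf c
  | node i t₀ t₁, z, b =>
    if i = z then cond b (t₁.restrictAt z b) (t₀.restrictAt z b)
    else node i (t₀.restrictAt z b) (t₁.restrictAt z b)

theorem depth_restrictAt (t : DTree n) (z : Fin n) (b : Bool) :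
    (t.restrictAt z b).depth ≤ t.depth := by
  induction t with
  | leaf c => simp [restrictAt]
  | node i t₀ t₁ ih₀ ih₁ =>
    simp only [restrictAt]
    split_ifs
    · cases b <;> simp [depth] <;> omega
    · simp only [depth]
      omega

theorem evalT_restrictAt (t : DTree n) (z : Fin n) (b : Bool) (x : Fin n → Bool) :
    (t.restrictAt z b).evalT x = t.evalT (Function.update x z b) := by
  induction t with
  | leaf c => simp [restrictAt, evalT]
  | node i t₀ t₁ ih₀ ih₁ =>
    simp only [restrictAt]
    split_ifs with h
    · subst h
      cases b <;> simp [evalT, ih₀, ih₁]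
    · simp [evalT, ih₀, ih₁, Function.update_of_ne h]

theorem evalT_node_eq {f : (Fin n → Bool) → Bool} {z : Fin n} {t₀ t₁ : DTree n}
    (h₀ : ∀ x, t₀.evalT x = BF.restrictAt f z false x)
    (h₁ : ∀ x, t₁.evalT x = BF.restrictAt f z true x)
    (x : Fin n → Bool) : (node z t₀ t₁).evalT x = f x := by
  cases hx : x z <;> simp [evalT, hx, h₀, h₁, restrictAt_apply_of_eq hx]

theorem exists_evalT_eq_of_dependsOn (S : Finset (Fin n)) :
    ∀ f : (Fin n → Bool) → Bool, DependsOn f (S : Set (Fin n)) →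
      ∃ t : DTree n, ∀ x, t.evalT x = f x := by
  induction S using Finset.induction_on with
  | empty =>
    intro f hf
    exact ⟨leaf (f fun _ => false), fun x => (by simpa using hf : DependsOn f ∅).empty _ _⟩
  | insert z S _ ih =>
    intro f hf
    have hdep : ∀ c, ∃ t : DTree n, ∀ x, t.evalT x = BF.restrictAt f z c x := fun c =>
      ih _ fun x y hxy => hf fun i hi => by
        rcases eq_or_ne i z with rfl | hiz
        · simp
        · simpa [Function.update_of_ne hiz] using hxy i (by simpa [hiz] using hi)
    obtain ⟨t₀, h₀⟩ := hdep false
    obtain ⟨t₁, h₁⟩ := hdep true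
    exact ⟨node z t₀ t₁, evalT_node_eq h₀ h₁⟩

theorem exists_evalT_eq (f : (Fin n → Bool) → Bool) : ∃ t : DTree n, ∀ x, t.evalT x = f x :=
  exists_evalT_eq_of_dependsOn Finset.univ f (by simpa using dependsOn_univ f)

end DTree

section DecisionTreeDepth

variable {n : ℕ} {f : (Fin n → Bool) → Bool} {d : ℕ}

theorem DT_le_iff : DT f ≤ d ↔ ∃ t : DTree n, t.depth ≤ d ∧ ∀ x, t.evalT x = f x := by
  refine ⟨fun h => ?_, fun ⟨t, ht, hf⟩ => le_trans (Nat.sInf_le ⟨t, le_rfl, hf⟩ : DT f ≤ _) ht⟩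
  obtain ⟨t, ht⟩ := DTree.exists_evalT_eq f
  have hne : {d | ∃ t : DTree n, t.depth ≤ d ∧ ∀ x, t.evalT x = f x}.Nonempty :=
    ⟨t.depth, t, le_rfl, ht⟩
  obtain ⟨s, hs, hsf⟩ := Nat.sInf_mem hne
  exact ⟨s, hs.trans h, hsf⟩

theorem DT_eq_zero_iff : DT f = 0 ↔ ∃ c, ∀ x, f x = c := by
  rw [← Nat.le_zero, DT_le_iff]
  constructor
  · rintro ⟨t | ⟨i, t₀, t₁⟩, ht, hf⟩
    · exact ⟨t, fun x => (hf x).symm⟩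
    · simp [DTree.depth] at ht
  · rintro ⟨c, hc⟩
    exact ⟨.leaf c, le_rfl, fun x => (hc x).symm⟩

theorem nrel_eq_zero_of_DT_eq_zero (h : DT f = 0) : nrel f = 0 := by
  obtain ⟨c, hc⟩ := DT_eq_zero_iff.1 h
  simp [nrel, relSet_eq_empty_of_forall_eq hc]

theorem DT_restrictAt_le (f : (Fin n → Bool) → Bool) (z : Fin n) (c : Bool) :
    DT (restrictAt f z c) ≤ DT f := by
  obtain ⟨t, ht, hf⟩ := DT_le_iff.1 (le_refl (DT f))
  exact DT_le_iff.2 ⟨t.restrictAt z c, (t.depth_restrictAt z c).trans ht,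
    fun x => by rw [DTree.evalT_restrictAt, hf]; rfl⟩

theorem DT_le_succ_of_restrictAt {z : Fin n} (h : ∀ c, DT (restrictAt f z c) ≤ d) :
    DT f ≤ d + 1 := by
  obtain ⟨t₀, ht₀, hf₀⟩ := DT_le_iff.1 (h false)
  obtain ⟨t₁, ht₁, hf₁⟩ := DT_le_iff.1 (h true)
  refine DT_le_iff.2 ⟨.node z t₀ t₁, ?_, DTree.evalT_node_eq hf₀ hf₁⟩
  simp only [DTree.depth]
  omega

theorem DT_eq_zero_or_exists_restrictAt (h : DT f ≤ d + 1) :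
    DT f = 0 ∨ ∃ z, ∀ c, DT (restrictAt f z c) ≤ d := by
  obtain ⟨t | ⟨z, t₀, t₁⟩, ht, hf⟩ := DT_le_iff.1 h
  · exact Or.inl (DT_eq_zero_iff.2 ⟨t, fun x => (hf x).symm⟩)
  refine Or.inr ⟨z, fun c => DT_le_iff.2 ⟨(cond c t₁ t₀).restrictAt z c, ?_, fun x => ?_⟩⟩
  · refine (DTree.depth_restrictAt _ z c).trans ?_
    simp only [DTree.depth] at ht
    cases c <;> simp <;> omega
  · rw [DTree.evalT_restrictAt]
    show _ = f _
    rw [← hf]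
    cases c <;> simp [DTree.evalT]

theorem BF.Forces.DT_restrictAt_le {u : Fin n} {b : Bool} (hf : Forces f u b) (hd : DT f ≤ d) :
    DT (restrictAt f u (!b)) ≤ d - 1 := by
  induction d generalizing f with
  | zero => exact (DT_restrictAt_le f u (!b)).trans hd
  | succ d ih =>
    rcases DT_eq_zero_or_exists_restrictAt hd with h0 | ⟨z, hz⟩
    · exact (DT_restrictAt_le f u (!b)).trans (h0.trans_le (Nat.zero_le _))
    rcases eq_or_ne z u with rfl | hzu
    · exact hz _
    have hsub : ∀ c, DT (restrictAt (restrictAt f u (!b)) z c) ≤ d - 1 := fun c => by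
      rw [restrictAt_comm hzu.symm]
      exact ih (hf.restrictAt_of_ne hzu c) (hz c)
    cases d with
    | zero =>
      have hconst : ∀ c x, restrictAt f z c x = b := fun c => by
        obtain ⟨c', hc'⟩ := DT_eq_zero_iff.1 (Nat.le_zero.1 (hz c))
        rwa [← (hf.restrictAt_of_ne hzu c).eq_of_forall_eq hc']
      refine (DT_eq_zero_iff.2 ⟨b, fun x => ?_⟩).le
      show f (Function.update x u (!b)) = b
      exact (restrictAt_apply_of_eq rfl).symm.trans (hconst _ _)
    | succ d => exact DT_le_succ_of_restrictAt hsub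

end DecisionTreeDepth

/-- The paper's bounds `R_1 = 1, R_2 ≤ 2, R_3 ≤ 4` and `R_d ≤ 2 ^ (d - 2) + 2` for `d ≥ 4`. -/
def relBound : ℕ → ℕ
  | 0 => 0
  | 1 => 1
  | 2 => 2
  | 3 => 4
  | d + 4 => 2 ^ (d + 2) + 2

theorem max_le_relBound (d : ℕ) :
    max (relBound (d + 1) + 1) (max (2 * relBound (d + 1) - 2) (2 * relBound d + 2))
      ≤ relBound (d + 2) := by
  match d with
  | 0 | 1 | 2 | 3 => decide
  | m + 4 =>
    simp only [relBound]
    have : 4 ≤ 2 ^ (m + 2) := by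
      calc 4 = 2 ^ 2 := rfl
        _ ≤ 2 ^ (m + 2) := Nat.pow_le_pow_right two_pos (by omega)
    rw [show 2 ^ (m + 1 + 2) = 2 * 2 ^ (m + 2) by ring,
      show 2 ^ (m + 2 + 2) = 4 * 2 ^ (m + 2) by ring]
    omega

theorem nrel_le_relBound {n : ℕ} {f : (Fin n → Bool) → Bool} (hf : Monotone f) {d : ℕ}
    (hd : DT f ≤ d) : nrel f ≤ relBound d := by
  induction d using Nat.strong_induction_on generalizing f with
  | _ d ih =>
  rcases d with _ | d
  · simp [nrel_eq_zero_of_DT_eq_zero (Nat.le_zero.1 hd)]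
  rcases DT_eq_zero_or_exists_restrictAt hd with h0 | ⟨z, hz⟩
  · simp [nrel_eq_zero_of_DT_eq_zero h0]
  have ha : ∀ c, nrel (restrictAt f z c) ≤ relBound d := fun c =>
    ih d (by omega) (monotone_restrictAt hf z c) (hz c)
  rcases d with _ | d
  · have := nrel_add_card_inter_le f z
    have := ha false
    have := ha true
    simp only [relBound] at *
    omega
  refine le_trans (nrel_le_of_restrictAt hf z ha fun c u b hforces => ?_) (max_le_relBound d)
  have hg := ih d (by omega) (monotone_restrictAt (monotone_restrictAt hf z c) u (!b))
    (hforces.DT_restrictAt_le (hz c))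
  exact hforces.nrel_le.trans (by omega)

/-- every monotone boolean function of decision tree depth at most
`d ≥ 5` has at most `2^{d−2} + 2` relevant variables. -/
theorem stmt18 {n : ℕ} (d : ℕ) (hd : 5 ≤ d) (f : (Fin n → Bool) → Bool)
    (hmono : Monotone f) (hDT : DT f ≤ d) :
    nrel f ≤ 2 ^ (d - 2) + 2 := by
  obtain ⟨m, rfl⟩ : ∃ m, d = m + 4 := ⟨d - 4, by omega⟩
  exact nrel_le_relBound hmono hDT
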